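/- Under the hypotheses of Lemma C.2 (local SGD with bounded stochastic gradients E‖∇F_k^{i}(w)‖² ≤ ξ_k², non-increasing step size with η_t ≤ 2η_{t+τ}), the weighted deviation of local models from the virtual average v_t = ∑_k α_k w_t^(k) satisfies E[∑_{k=1}^K α_k ‖v_t − w_t^(k)‖²] ≤ 4(τ−1)² η_t² ∑_{k=1}^K α_k ξ_k². -/

import Mathlib

open MeasureTheory ProbabilityTheory

/-- Lemma C.2: in federated local SGD with convex weights `α`, bounded stochastic gradients
(`E‖g k t'‖² ≤ ξ k²`) and non-increasing step sizes with `η_t ≤ 2η_{t+τ}`, the weighted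
deviation of local models from the virtual average `v_t = ∑ α k • w k t` satisfies
`E[∑ α k ‖v_t − w k t‖²] ≤ 4(τ−1)² η_t² ∑ α k ξ k²`. -/
theorem weighted_deviation_from_average (mDim τ K : ℕ) (hτ : 1 ≤ τ) (t₀ t : ℕ)
    (ht₀ : t₀ ≤ t) (ht : t ≤ t₀ + τ - 1)
    {Ω : Type*} [MeasureSpace Ω] [IsProbabilityMeasure (ℙ : Measure Ω)]
    (α : Fin K → ℝ) (hα : ∀ k, 0 ≤ α k) (hsum : ∑ k, α k = 1)
    (w g : Fin K → ℕ → Ω → EuclideanSpace ℝ (Fin mDim)) (η : ℕ → ℝ) (ξ : Fin K → ℝ)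
    (hsync : ∀ k k', w k t₀ = w k' t₀)
    (hrec : ∀ k t', t₀ ≤ t' → t' < t →
      w k (t' + 1) = fun ω => w k t' ω - η t' • g k t' ω)
    (hL2 : ∀ k t', MemLp (g k t') 2 (ℙ : Measure Ω))
    (hg : ∀ k t', ∫ ω, ‖g k t' ω‖ ^ 2 ∂(ℙ : Measure Ω) ≤ (ξ k) ^ 2)
    (hmono : Antitone η) (hpos : ∀ s, 0 ≤ η s) (hη : ∀ s, η s ≤ 2 * η (s + τ)) :
    ∫ ω, ∑ k, α k * ‖(∑ l, α l • w l t ω) - w k t ω‖ ^ 2 ∂(ℙ : Measure Ω) ≤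
      4 * ((τ : ℝ) - 1) ^ 2 * (η t) ^ 2 * ∑ k, α k * (ξ k) ^ 2 := by
  classical
  have hK : K ≠ 0 := by rintro rfl; simp at hsum
  set k0 : Fin K := ⟨0, Nat.pos_of_ne_zero hK⟩
  -- variance inequality
  have var_le : ∀ (c : EuclideanSpace ℝ (Fin mDim)) (x : Fin K → EuclideanSpace ℝ (Fin mDim)),
      ∑ k, α k * ‖(∑ l, α l • x l) - x k‖ ^ 2 ≤ ∑ k, α k * ‖c - x k‖ ^ 2 := by
    intro c x
    set v : EuclideanSpace ℝ (Fin mDim) := ∑ l, α l • x l with hv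
    have hzero : ∑ k, α k • (v - x k) = 0 := by
      simp only [smul_sub, Finset.sum_sub_distrib]
      rw [← Finset.sum_smul, hsum, one_smul]
      simp [hv]
    have expand : ∀ k : Fin K, ‖c - x k‖ ^ 2
        = ‖c - v‖ ^ 2 + 2 * inner ℝ (c - v) (v - x k) + ‖v - x k‖ ^ 2 := by
      intro k
      have h := norm_add_sq_real (c - v) (v - x k)
      have h2 : c - x k = (c - v) + (v - x k) := by abel
      rw [h2, h]
    have hsplit : ∑ k, α k * ‖c - x k‖ ^ 2
        = ‖c - v‖ ^ 2 + (2 * inner ℝ (c - v) (∑ k, α k • (v - x k))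
            + ∑ k, α k * ‖v - x k‖ ^ 2) := by
      have h1 : ∀ k : Fin K, α k * ‖c - x k‖ ^ 2
          = α k * ‖c - v‖ ^ 2 + 2 * inner ℝ (c - v) (α k • (v - x k)) + α k * ‖v - x k‖ ^ 2 := by
        intro k
        rw [expand k, real_inner_smul_right]
        ring
      rw [Finset.sum_congr rfl (fun k _ => h1 k), Finset.sum_add_distrib,
        Finset.sum_add_distrib, ← Finset.sum_mul, hsum, one_mul, inner_sum,
        ← Finset.mul_sum, ← inner_sum]
      ring
    rw [hsplit, hzero]
    simp only [inner_zero_right, mul_zero, zero_add]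
    nlinarith [sq_nonneg ‖c - v‖]
  -- unrolling the recursion
  have unroll : ∀ k, w k t = fun ω => w k t₀ ω - ∑ r ∈ Finset.Ico t₀ t, η r • g k r ω := by
    intro k
    have H : ∀ s, t₀ ≤ s → s ≤ t →
        w k s = fun ω => w k t₀ ω - ∑ r ∈ Finset.Ico t₀ s, η r • g k r ω := by
      intro s hs hst
      induction s, hs using Nat.le_induction with
      | base => simp
      | succ n hn ih =>
        have hnt : n < t := hst
        rw [hrec k n hn hnt, ih (le_of_lt hnt)]
        funext ω
        rw [Finset.sum_Ico_succ_top hn]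
        simp [sub_sub]
    exact H t ht₀ le_rfl
  -- step-size bound
  have hηs : ∀ s, t₀ ≤ s → η s ^ 2 ≤ 4 * η t ^ 2 := by
    intro s hs
    have h1 : η s ≤ η t₀ := hmono hs
    have h2 : η t₀ ≤ 2 * η (t₀ + τ) := hη t₀
    have h3 : η (t₀ + τ) ≤ η t := hmono (le_trans ht (Nat.sub_le _ _))
    have h4 : 0 ≤ η s := hpos s
    nlinarith [hpos t]
  -- cardinality bound
  have hcard : ((t - t₀ : ℕ) : ℝ) ≤ (τ : ℝ) - 1 := by
    have h1 : t - t₀ ≤ τ - 1 := by omega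
    calc ((t - t₀ : ℕ) : ℝ) ≤ ((τ - 1 : ℕ) : ℝ) := by exact_mod_cast h1
      _ = (τ : ℝ) - 1 := by
          rw [Nat.cast_sub hτ]; norm_num
  have hcard0 : (0:ℝ) ≤ ((t - t₀ : ℕ) : ℝ) := Nat.cast_nonneg _
  -- pointwise bound
  set c : ℝ := ((t - t₀ : ℕ) : ℝ) with hc
  set G : Ω → ℝ := fun ω => ∑ k, ∑ r ∈ Finset.Ico t₀ t,
    (c * (α k * (4 * η t ^ 2))) * ‖g k r ω‖ ^ 2 with hG
  have point : ∀ ω, ∑ k, α k * ‖(∑ l, α l • w l t ω) - w k t ω‖ ^ 2 ≤ G ω := by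
    intro ω
    refine le_trans (var_le (w k0 t₀ ω) (fun l => w l t ω)) ?_
    rw [hG]
    refine Finset.sum_le_sum (fun k _ => ?_)
    have hw : w k0 t₀ ω - w k t ω = ∑ r ∈ Finset.Ico t₀ t, η r • g k r ω := by
      simp only [hsync k0 k, unroll k]
      exact sub_sub_cancel _ _
    rw [hw]
    have h1 : ‖∑ r ∈ Finset.Ico t₀ t, η r • g k r ω‖ ≤
        ∑ r ∈ Finset.Ico t₀ t, ‖η r • g k r ω‖ := norm_sum_le _ _
    have h2 : ‖∑ r ∈ Finset.Ico t₀ t, η r • g k r ω‖ ^ 2 ≤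
        (∑ r ∈ Finset.Ico t₀ t, ‖η r • g k r ω‖) ^ 2 :=
      pow_le_pow_left₀ (norm_nonneg _) h1 2
    have h3 : (∑ r ∈ Finset.Ico t₀ t, ‖η r • g k r ω‖) ^ 2 ≤
        (Finset.Ico t₀ t).card * ∑ r ∈ Finset.Ico t₀ t, ‖η r • g k r ω‖ ^ 2 :=
      sq_sum_le_card_mul_sum_sq
    have h4 : ∑ r ∈ Finset.Ico t₀ t, ‖η r • g k r ω‖ ^ 2 ≤
        ∑ r ∈ Finset.Ico t₀ t, (4 * η t ^ 2) * ‖g k r ω‖ ^ 2 := by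
      refine Finset.sum_le_sum (fun r hr => ?_)
      rw [norm_smul, mul_pow]
      have := hηs r (Finset.mem_Ico.mp hr).1
      have : ‖η r‖ ^ 2 ≤ 4 * η t ^ 2 := by
        rw [Real.norm_eq_abs, sq_abs]; exact this
      nlinarith [sq_nonneg ‖g k r ω‖, norm_nonneg (g k r ω)]
    have hcardIco : ((Finset.Ico t₀ t).card : ℝ) = c := by
      rw [Nat.card_Ico, hc]
    calc α k * ‖∑ r ∈ Finset.Ico t₀ t, η r • g k r ω‖ ^ 2
        ≤ α k * ((Finset.Ico t₀ t).card * ∑ r ∈ Finset.Ico t₀ t,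
            (4 * η t ^ 2) * ‖g k r ω‖ ^ 2) := by
          refine mul_le_mul_of_nonneg_left ?_ (hα k)
          refine le_trans h2 (le_trans h3 ?_)
          exact mul_le_mul_of_nonneg_left h4 (Nat.cast_nonneg _)
      _ = ∑ r ∈ Finset.Ico t₀ t, (c * (α k * (4 * η t ^ 2))) * ‖g k r ω‖ ^ 2 := by
          rw [hcardIco, Finset.mul_sum, Finset.mul_sum]
          refine Finset.sum_congr rfl (fun r _ => by ring)
  -- integrability
  have hint : ∀ (k : Fin K) (r : ℕ), Integrable (fun ω => ‖g k r ω‖ ^ 2) (ℙ : Measure Ω) := by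
    intro k r
    have h := (hL2 k r).integrable_norm_rpow (by norm_num) (by norm_num)
    have he : ((2 : ENNReal)).toReal = (2 : ℝ) := by norm_num
    refine h.congr ?_
    filter_upwards with ω
    rw [he, ← Real.rpow_natCast ‖g k r ω‖ 2]
    norm_num
  have hGint : Integrable G (ℙ : Measure Ω) := by
    refine integrable_finset_sum _ (fun k _ => ?_)
    exact integrable_finset_sum _ (fun r _ => ((hint k r).const_mul _))
  -- nonnegativity of LHS integrand
  have hnn : ∀ ω, 0 ≤ ∑ k, α k * ‖(∑ l, α l • w l t ω) - w k t ω‖ ^ 2 := by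
    intro ω
    refine Finset.sum_nonneg (fun k _ => ?_)
    exact mul_nonneg (hα k) (sq_nonneg _)
  -- put things together
  have step1 : ∫ ω, ∑ k, α k * ‖(∑ l, α l • w l t ω) - w k t ω‖ ^ 2 ∂(ℙ : Measure Ω) ≤
      ∫ ω, G ω ∂(ℙ : Measure Ω) := by
    refine integral_mono_of_nonneg ?_ hGint ?_
    · filter_upwards with ω using hnn ω
    · filter_upwards with ω using point ω
  refine le_trans step1 ?_
  have hGeq : ∫ ω, G ω ∂(ℙ : Measure Ω) = ∑ k, ∑ r ∈ Finset.Ico t₀ t,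
      (c * (α k * (4 * η t ^ 2))) * ∫ ω, ‖g k r ω‖ ^ 2 ∂(ℙ : Measure Ω) := by
    rw [hG, integral_finset_sum _ (fun k _ =>
      integrable_finset_sum _ (fun r _ => ((hint k r).const_mul _)))]
    refine Finset.sum_congr rfl (fun k _ => ?_)
    rw [integral_finset_sum _ (fun r _ => ((hint k r).const_mul _))]
    exact Finset.sum_congr rfl (fun r _ => integral_const_mul _ _)
  rw [hGeq]
  have hcoef : ∀ k : Fin K, 0 ≤ c * (α k * (4 * η t ^ 2)) := fun k =>
    mul_nonneg hcard0 (mul_nonneg (hα k) (by positivity))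
  have step2 : ∑ k, ∑ r ∈ Finset.Ico t₀ t,
      (c * (α k * (4 * η t ^ 2))) * ∫ ω, ‖g k r ω‖ ^ 2 ∂(ℙ : Measure Ω) ≤
      ∑ k : Fin K, c * c * (α k * (4 * η t ^ 2)) * ξ k ^ 2 := by
    refine Finset.sum_le_sum (fun k _ => ?_)
    calc ∑ r ∈ Finset.Ico t₀ t, (c * (α k * (4 * η t ^ 2))) * ∫ ω, ‖g k r ω‖ ^ 2 ∂(ℙ : Measure Ω)
        ≤ ∑ r ∈ Finset.Ico t₀ t, (c * (α k * (4 * η t ^ 2))) * ξ k ^ 2 :=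
          Finset.sum_le_sum (fun r _ =>
            mul_le_mul_of_nonneg_left (hg k r) (hcoef k))
      _ = c * c * (α k * (4 * η t ^ 2)) * ξ k ^ 2 := by
          rw [Finset.sum_const, Nat.card_Ico, nsmul_eq_mul, ← hc]
          ring
  refine le_trans step2 ?_
  rw [Finset.mul_sum]
  refine Finset.sum_le_sum (fun k _ => ?_)
  have h1 : c * c ≤ ((τ : ℝ) - 1) ^ 2 := by nlinarith
  have h2 : 0 ≤ α k * (4 * η t ^ 2) * ξ k ^ 2 := mul_nonneg (mul_nonneg (hα k) (by positivity)) (sq_nonneg _)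
  nlinarith [h2, h1]
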